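/- Let G be a graph with no degree-choosable component of radius at most r, and let T be the (unique) depth-r BFS tree rooted at some vertex v. If u' is a vertex of T with deg_G(u') ≥ 3 and u is the parent of u' in T (with u' at depth at most r), then d(u) + d(u') ≥ min{deg_G(u), deg_G(u')}, where d(w) denotes the number of children of w in T. -/

import Mathlib

open SimpleGraph

def IsOddCycle {V : Type*} (G : SimpleGraph V) : Prop :=
  G.Connected ∧ (∀ v, (G.neighborSet v).ncard = 2) ∧ Odd (Nat.card V)

def TwoConnected {V : Type*} (G : SimpleGraph V) : Prop :=
  3 ≤ Nat.card V ∧ ∀ v : V, (G.induce {w : V | w ≠ v}).Connected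

def DegreeChoosable {V : Type*} (G : SimpleGraph V) : Prop :=
  ∀ L : V → Finset ℕ, (∀ v, (G.neighborSet v).ncard ≤ (L v).card) →
    ∃ c : V → ℕ, (∀ v, c v ∈ L v) ∧ ∀ u w, G.Adj u w → c u ≠ c w

def IsDCC {V : Type*} (G : SimpleGraph V) (S : Set V) : Prop :=
  TwoConnected (G.induce S) ∧ G.induce S ≠ ⊤ ∧ ¬ IsOddCycle (G.induce S)

def RadiusLE {V : Type*} (G : SimpleGraph V) (S : Set V) (r : ℕ) : Prop :=
  ∃ u : S, ∀ w : S, (G.induce S).dist u w ≤ r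

def NoSmallDCC {V : Type*} (G : SimpleGraph V) (r : ℕ) : Prop :=
  ∀ S : Set V, IsDCC G S → ¬ RadiusLE G S r

def gball {V : Type*} (G : SimpleGraph V) (v : V) (r : ℕ) : Set V :=
  {u | G.Reachable v u ∧ G.dist v u ≤ r}

noncomputable def childCount {V : Type*} (G : SimpleGraph V) (v u : V) : ℕ :=
  {w | G.Adj u w ∧ G.dist v w = G.dist v u + 1}.ncard

/-!
Every neighbour of `u'` lies on level `t - 1`, `t` or `t + 1` of the BFS from `v`, and `u` is its
only neighbour on level `t - 1`: two parents of a vertex on level `s` would close up, with BFS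
paths to them, an even cycle of length at most `2s` with two non-adjacent vertices, i.e. a
2-connected, non-complete set of radius at most `r` that is not an odd cycle.

If every neighbour of `u'` on level `t` is adjacent to `u`, these neighbours and `u'` are children
of `u`, so `deg u' ≤ d(u) + d(u')`. Otherwise let `y` be such a neighbour not adjacent to `u`. The
BFS paths to `u'` and to `y` close up into a cycle `S` through `u`, `u'`, `y` of length at most
`2t + 1` containing two vertices whose levels differ by at least two, so `S` induces an odd
cycle. A neighbour `x ∉ S` of `c = u'` (or `c = u`) on the level of `c` gives, with BFS paths to
`c` and `x`, a second cycle `D` through `c` and its parent; then `S ∪ D` is 2-connected, not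
complete, of radius at most `r` around `c`, and not a cycle since `c` has three neighbours in it.
So `y` is the only neighbour of `u'` on level `t`, `u` has none on level `t - 1`, and
`deg u ≤ 1 + d(u) ≤ d(u) + d(u')`.
-/

namespace SimpleGraph

variable {V : Type*} {G : SimpleGraph V}

lemma induce_eq_top_iff {s : Set V} : G.induce s = ⊤ ↔ s.Pairwise G.Adj := by
  refine ⟨fun h x hx y hy hxy => ?_, fun h => ?_⟩
  · have : (⊤ : SimpleGraph s).Adj ⟨x, hx⟩ ⟨y, hy⟩ := fun he => hxy (congrArg Subtype.val he)
    rw [← h] at this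
    exact this
  · ext x y
    exact ⟨fun hxy => hxy.ne, fun hxy => h x.2 y.2 (Subtype.val_injective.ne hxy)⟩

lemma induce_ne_top_of_not_adj {s : Set V} {x y : V} (hx : x ∈ s) (hy : y ∈ s) (hxy : x ≠ y)
    (hnadj : ¬ G.Adj x y) : G.induce s ≠ ⊤ := fun h =>
  hnadj (induce_eq_top_iff.1 h hx hy hxy)

lemma ncard_neighborSet_induce {s : Set V} (x : s) :
    ((G.induce s).neighborSet x).ncard = (G.neighborSet x ∩ s).ncard := by
  rw [← Subtype.val_injective.injOn.ncard_image]
  congr 1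
  ext y
  simp [and_comm]

lemma dist_induce_le_of_subset {s t : Set V} (hst : s ⊆ t) {x y : s}
    (h : (G.induce s).Reachable x y) :
    (G.induce t).dist (Set.inclusion hst x) (Set.inclusion hst y) ≤ (G.induce s).dist x y := by
  obtain ⟨w, hw⟩ := h.exists_walk_length_eq_dist
  rw [← hw, ← w.length_map (G.induceHomOfLE hst).toHom]
  exact dist_le _

lemma twoConnected_induce_iff {s : Set V} :
    TwoConnected (G.induce s) ↔ 3 ≤ s.ncard ∧ ∀ w ∈ s, (G.induce (s \ {w})).Connected := by
  have e (w : s) : (G.induce s).induce {z | z ≠ w} ≃g G.induce (s \ {(w : V)}) :=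
    { toFun z := ⟨z.1.1, z.1.2, fun h => z.2 (Subtype.ext h)⟩
      invFun z := ⟨⟨z.1, z.2.1⟩, fun h => z.2.2 (congrArg Subtype.val h)⟩
      left_inv _ := rfl
      right_inv _ := rfl
      map_rel_iff' := Iff.rfl }
  rw [TwoConnected, Nat.card_coe_set_eq]
  exact and_congr_right fun _ =>
    ⟨fun h w hw => (e ⟨w, hw⟩).connected_iff.1 (h _), fun h w => (e w).connected_iff.2 (h w w.2)⟩

lemma TwoConnected.connected_induce {s : Set V} (h : TwoConnected (G.induce s)) :
    (G.induce s).Connected := by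
  obtain ⟨h3, h⟩ := twoConnected_induce_iff.1 h
  obtain ⟨a, b, c, ha, hb, hc, hab, hac, hbc⟩ :=
    (Set.two_lt_ncard_iff (Set.finite_of_ncard_ne_zero (by omega))).1 h3
  have hs : s = (s \ {a}) ∪ (s \ {b}) := by
    rw [← Set.sdiff_inter, Set.singleton_inter_eq_empty.2 (by simpa using hab), Set.sdiff_empty]
  rw [hs]
  exact induce_union_connected (h a ha).preconnected (h b hb).preconnected
    ⟨c, ⟨hc, hac.symm⟩, ⟨hc, hbc.symm⟩⟩

lemma TwoConnected.connected_induce_diff_singleton {s : Set V}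
    (h : TwoConnected (G.induce s)) (w : V) : (G.induce (s \ {w})).Connected := by
  by_cases hw : w ∈ s
  · exact (twoConnected_induce_iff.1 h).2 w hw
  · rw [Set.sdiff_singleton_eq_self hw]
    exact h.connected_induce

lemma twoConnected_induce_union {s t : Set V} (hs : TwoConnected (G.induce s))
    (ht : TwoConnected (G.induce t)) {x y : V} (hx : x ∈ s ∩ t) (hy : y ∈ s ∩ t) (hxy : x ≠ y) :
    TwoConnected (G.induce (s ∪ t)) := by
  have hs3 := (twoConnected_induce_iff.1 hs).1
  have ht3 := (twoConnected_induce_iff.1 ht).1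
  have hfin : (s ∪ t).Finite :=
    (Set.finite_of_ncard_ne_zero (by omega)).union (Set.finite_of_ncard_ne_zero (by omega))
  refine twoConnected_induce_iff.2 ⟨hs3.trans (Set.ncard_le_ncard Set.subset_union_left hfin),
    fun w _ => ?_⟩
  obtain ⟨z, hz, hzw⟩ : ∃ z ∈ s ∩ t, z ≠ w := by
    by_cases hxw : x = w
    · exact ⟨y, hy, fun h => hxy (hxw.trans h.symm)⟩
    · exact ⟨x, hx, hxw⟩
  rw [Set.union_sdiff_distrib]
  exact induce_union_connected (hs.connected_induce_diff_singleton w).preconnected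
    (ht.connected_induce_diff_singleton w).preconnected ⟨z, ⟨hz.1, hzw⟩, ⟨hz.2, hzw⟩⟩

lemma connected_induce_image_Icc {f : ℕ → V} (hf : ∀ i, G.Adj (f i) (f (i + 1))) (a n : ℕ) :
    (G.induce (f '' Set.Icc a (a + n))).Connected := by
  induction n with
  | zero =>
    rw [add_zero, Set.Icc_self, Set.image_singleton, induce_singleton_eq_top]
    exact connected_top
  | succ n ih =>
    have hI : Set.Icc a (a + (n + 1)) = Set.Icc a (a + n) ∪ {a + n, a + n + 1} := by
      ext i; simp only [Set.mem_Icc, Set.mem_union, Set.mem_insert_iff, Set.mem_singleton_iff]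
      omega
    rw [hI, Set.image_union, Set.image_pair]
    exact induce_union_connected ih.preconnected (induce_pair_connected_of_adj (hf _)).preconnected
      ⟨f (a + n), ⟨a + n, by simp, rfl⟩, by simp⟩

lemma dist_induce_le_of_adj {s : Set V} {f : ℕ → V} (hf : ∀ i, G.Adj (f i) (f (i + 1)))
    (hs : ∀ i, f i ∈ s) (a n : ℕ) {x y : s} (hx : (x : V) = f a) (hy : (y : V) = f (a + n)) :
    (G.induce s).dist x y ≤ n := by
  induction n generalizing y with
  | zero => simp [show y = x from Subtype.ext (hy.trans hx.symm)]
  | succ n ih =>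
    have hadj : (G.induce s).Adj ⟨f (a + n), hs _⟩ y := by
      rw [induce_adj, hy]
      exact hf (a + n)
    calc (G.induce s).dist x y
        ≤ (G.induce s).dist x ⟨f (a + n), hs _⟩ + (G.induce s).dist ⟨f (a + n), hs _⟩ y :=
          hadj.reachable.dist_triangle_right x
      _ ≤ n + 1 := by rw [dist_eq_one_iff_adj.2 hadj]; exact Nat.add_le_add_right (ih rfl) 1

/-- `f 0, f 1, …, f (L - 1)` are the vertices of a cycle of length `L`, listed periodically. -/
structure IsCycleSeq (G : SimpleGraph V) (f : ℕ → V) (L : ℕ) : Prop where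
  three_le : 3 ≤ L
  periodic : Function.Periodic f L
  adj : ∀ i, G.Adj (f i) (f (i + 1))
  injOn : Set.InjOn f (Set.Iio L)

namespace IsCycleSeq

variable {f : ℕ → V} {L : ℕ}

lemma mem_image (hf : IsCycleSeq G f L) (i : ℕ) : f i ∈ f '' Set.Iio L :=
  ⟨i % L, Nat.mod_lt i (by have := hf.three_le; omega), hf.periodic.map_mod_nat i⟩

lemma ncard_image (hf : IsCycleSeq G f L) : (f '' Set.Iio L).ncard = L :=
  hf.injOn.ncard_image.trans (Set.ncard_Iio_nat L)

lemma image_diff_singleton (hf : IsCycleSeq G f L) {k : ℕ} (hk : k < L) :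
    f '' Set.Iio L \ {f k} = f '' Set.Icc (k + 1) (k + 1 + (L - 2)) := by
  have hL := hf.three_le
  ext x
  simp only [Set.mem_sdiff, Set.mem_image, Set.mem_Iio, Set.mem_Icc, Set.mem_singleton_iff]
  constructor
  · rintro ⟨⟨j, hj, rfl⟩, hjk⟩
    have hjk' : j ≠ k := fun h => hjk (h ▸ rfl)
    rcases lt_or_gt_of_ne hjk' with hlt | hgt
    · exact ⟨j + L, by omega, hf.periodic j⟩
    · exact ⟨j, by omega, rfl⟩
  · rintro ⟨i, hi, rfl⟩
    obtain ⟨j, hj, hjk, hij⟩ : ∃ j < L, j ≠ k ∧ f i = f j := by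
      by_cases hiL : i < L
      · exact ⟨i, hiL, by omega, rfl⟩
      · refine ⟨i - L, by omega, by omega, ?_⟩
        rw [← hf.periodic (i - L), Nat.sub_add_cancel (by omega)]
    rw [hij]
    exact ⟨⟨j, hj, rfl⟩, fun h => hjk (hf.injOn hj hk h)⟩

lemma twoConnected (hf : IsCycleSeq G f L) : TwoConnected (G.induce (f '' Set.Iio L)) := by
  refine twoConnected_induce_iff.2 ⟨hf.ncard_image.symm ▸ hf.three_le, ?_⟩
  rintro _ ⟨k, hk, rfl⟩
  rw [hf.image_diff_singleton hk]
  exact connected_induce_image_Icc hf.adj _ _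

lemma dist_le (hf : IsCycleSeq G f L) (x y : f '' Set.Iio L) :
    (G.induce (f '' Set.Iio L)).dist x y ≤ L / 2 := by
  have key : ∀ x y : f '' Set.Iio L, ∀ i j, i ≤ j → j < L → (x : V) = f i → (y : V) = f j →
      (G.induce (f '' Set.Iio L)).dist x y ≤ L / 2 := by
    intro x y i j hij hj hx hy
    -- going forward from `f i` takes `j - i` steps, going backward takes `L - (j - i)`
    have h₁ := dist_induce_le_of_adj hf.adj hf.mem_image i (j - i) hx
      (by rw [hy, Nat.add_sub_cancel' hij])
    have h₂ := dist_induce_le_of_adj hf.adj hf.mem_image j (L - (j - i)) hy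
      (by rw [hx, ← hf.periodic i]; congr 1; omega)
    rw [dist_comm] at h₂
    omega
  obtain ⟨i, hi, hx⟩ := x.2
  obtain ⟨j, hj, hy⟩ := y.2
  rcases le_total i j with hij | hji
  · exact key x y i j hij hj hx.symm hy.symm
  · rw [dist_comm]; exact key y x j i hji hi hy.symm hx.symm

end IsCycleSeq

lemma isCycleSeq_mod {g : ℕ → V} {L : ℕ} (hL : 3 ≤ L) (hg : g L = g 0)
    (hadj : ∀ i < L, G.Adj (g i) (g (i + 1))) (hinj : Set.InjOn g (Set.Iio L)) :
    IsCycleSeq G (fun i => g (i % L)) L where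
  three_le := hL
  periodic i := by simp
  adj i := by
    have hk := Nat.mod_lt i (by omega : 0 < L)
    show G.Adj (g (i % L)) (g ((i + 1) % L))
    rw [Nat.add_mod, Nat.mod_eq_of_lt (by omega : 1 < L)]
    rcases (by omega : i % L + 1 < L ∨ i % L + 1 = L) with h | h
    · rw [Nat.mod_eq_of_lt h]
      exact hadj _ hk
    · rw [h, Nat.mod_self, ← hg]
      simpa only [h] using hadj _ hk
  injOn i hi j hj hij := by
    simp only [Nat.mod_eq_of_lt (Set.mem_Iio.1 hi), Nat.mod_eq_of_lt (Set.mem_Iio.1 hj)] at hij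
    exact hinj hi hj hij

structure IsGeodesicSeq (G : SimpleGraph V) (v : V) (p : ℕ → V) (n : ℕ) : Prop where
  zero : p 0 = v
  adj : ∀ i < n, G.Adj (p i) (p (i + 1))
  dist_eq : ∀ i ≤ n, G.dist v (p i) = i

lemma Reachable.exists_isGeodesicSeq {v x : V} (h : G.Reachable v x) :
    ∃ p, IsGeodesicSeq G v p (G.dist v x) ∧ p (G.dist v x) = x := by
  obtain ⟨w, hw⟩ := h.exists_walk_length_eq_dist
  refine ⟨w.getVert, ⟨w.getVert_zero, fun i hi => w.adj_getVert_succ (by omega), fun i hi => ?_⟩,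
    by rw [← hw, w.getVert_length]⟩
  have hle : G.dist v (w.getVert i) ≤ i := by
    simpa [hw, hi] using dist_le (w.take i)
  have hdrop : G.dist (w.getVert i) x ≤ G.dist v x - i := by
    simpa [hw] using dist_le (w.drop i)
  have htri := (w.take i).reachable.dist_triangle_left x
  omega

lemma exists_isGeodesicSeq_of_adj {v x y : V} (hxy : G.Adj x y)
    (hd : G.dist v y = G.dist v x + 1) :
    ∃ p, IsGeodesicSeq G v p (G.dist v y) ∧ p (G.dist v x) = x ∧ p (G.dist v y) = y := by
  have hx : G.Reachable v x :=
    (Reachable.of_dist_ne_zero (by omega : G.dist v y ≠ 0)).trans hxy.symm.reachable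
  obtain ⟨p, hp, hpx⟩ := hx.exists_isGeodesicSeq
  refine ⟨fun i => if i ≤ G.dist v x then p i else y, ⟨by simp [hp.zero], fun i hi => ?_,
    fun i hi => ?_⟩, by simp [hpx], by simp [hd]⟩
  · by_cases hin : i + 1 ≤ G.dist v x
    · simp only [hin, show i ≤ G.dist v x by omega, if_true]
      exact hp.adj i (by omega)
    · simp only [show i = G.dist v x by omega, le_refl, if_true, add_le_iff_nonpos_right,
        Nat.one_ne_zero, nonpos_iff_eq_zero, if_false, hpx]
      exact hxy
  · by_cases hin : i ≤ G.dist v x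
    · simp only [hin, if_true]
      exact hp.dist_eq i hin
    · simp only [hin, if_false]
      omega

lemma IsGeodesicSeq.exists_branch {v : V} {p q : ℕ → V} {a b : ℕ} (hp : IsGeodesicSeq G v p a)
    (hq : IsGeodesicSeq G v q b) (hne : p b ≠ q b) :
    ∃ m < b, p m = q m ∧ ∀ i j, m ≤ i → i ≤ a → m < j → j ≤ b → p i ≠ q j := by
  classical
  obtain ⟨m, hmb, hpq, hlast⟩ : ∃ m ≤ b, p m = q m ∧ ∀ i, m < i → i ≤ b → p i ≠ q i :=
    ⟨Nat.findGreatest (fun i => p i = q i) b, Nat.findGreatest_le b,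
      Nat.findGreatest_spec (P := fun i => p i = q i) (Nat.zero_le b) (hp.zero.trans hq.zero.symm),
      fun i h₁ h₂ => Nat.findGreatest_is_greatest h₁ h₂⟩
  refine ⟨m, lt_of_le_of_ne hmb fun h => hne (h ▸ hpq), hpq, fun i j _ hia hmj hjb h => ?_⟩
  have hij : i = j := by rw [← hp.dist_eq i hia, ← hq.dist_eq j hjb, h]
  exact hlast j hmj hjb (hij ▸ h)

/-- The closed walk `p m, p (m + 1), …, p a, q b, q (b - 1), …, q (m + 1)`. -/
def joinSeq (p q : ℕ → V) (m a b k : ℕ) : V :=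
  if k ≤ a - m then p (m + k) else q (a + b + 1 - m - k)

lemma joinSeq_of_le {p q : ℕ → V} {m a b k : ℕ} (hk : k ≤ a - m) :
    joinSeq p q m a b k = p (m + k) := if_pos hk

lemma joinSeq_of_lt {p q : ℕ → V} {m a b k : ℕ} (hk : a - m < k) :
    joinSeq p q m a b k = q (a + b + 1 - m - k) := if_neg (by omega)

lemma IsGeodesicSeq.isCycleSeq_joinSeq {v : V} {p q : ℕ → V} {m a b : ℕ}
    (hp : IsGeodesicSeq G v p a) (hq : IsGeodesicSeq G v q b) (hmb : m < b) (hba : b ≤ a)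
    (hpq : p m = q m) (hcross : ∀ i j, m ≤ i → i ≤ a → m < j → j ≤ b → p i ≠ q j)
    (hadj : G.Adj (p a) (q b)) :
    IsCycleSeq G (fun i => joinSeq p q m a b (i % (a + b + 1 - 2 * m))) (a + b + 1 - 2 * m) := by
  refine isCycleSeq_mod (by omega) ?_ (fun k hk => ?_) fun i hi j hj hij => ?_
  · rw [joinSeq_of_lt (by omega), joinSeq_of_le (Nat.zero_le _),
      show a + b + 1 - m - (a + b + 1 - 2 * m) = m by omega, add_zero, hpq]
  · rcases (by omega : k + 1 ≤ a - m ∨ k = a - m ∨ a - m < k) with h | h | h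
    · rw [joinSeq_of_le (by omega), joinSeq_of_le h, ← add_assoc]
      exact hp.adj _ (by omega)
    · rw [joinSeq_of_le h.le, joinSeq_of_lt (by omega), show m + k = a by omega,
        show a + b + 1 - m - (k + 1) = b by omega]
      exact hadj
    · rw [joinSeq_of_lt h, joinSeq_of_lt (by omega)]
      have := hq.adj (a + b + 1 - m - (k + 1)) (by omega)
      rw [show a + b + 1 - m - (k + 1) + 1 = a + b + 1 - m - k by omega] at this
      exact this.symm
  · simp only [Set.mem_Iio] at hi hj
    rcases le_or_gt i (a - m) with hi' | hi' <;> rcases le_or_gt j (a - m) with hj' | hj'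
    · rw [joinSeq_of_le hi', joinSeq_of_le hj'] at hij
      have := (hp.dist_eq _ (by omega)).symm.trans (hij ▸ hp.dist_eq _ (by omega))
      omega
    · rw [joinSeq_of_le hi', joinSeq_of_lt hj'] at hij
      exact absurd hij (hcross _ _ (by omega) (by omega) (by omega) (by omega))
    · rw [joinSeq_of_lt hi', joinSeq_of_le hj'] at hij
      exact absurd hij.symm (hcross _ _ (by omega) (by omega) (by omega) (by omega))
    · rw [joinSeq_of_lt hi', joinSeq_of_lt hj'] at hij
      have := (hq.dist_eq _ (by omega)).symm.trans (hij ▸ hq.dist_eq _ (by omega))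
      omega

lemma image_subset_image_joinSeq {p q : ℕ → V} {m a b : ℕ} (hmb : m < b) (hba : b ≤ a)
    (hpq : p m = q m) :
    p '' Set.Icc m a ∪ q '' Set.Icc m b ⊆
      (fun i => joinSeq p q m a b (i % (a + b + 1 - 2 * m))) '' Set.Iio (a + b + 1 - 2 * m) := by
  have hmem : ∀ k < a + b + 1 - 2 * m, ∀ x, joinSeq p q m a b k = x →
      x ∈ (fun i => joinSeq p q m a b (i % (a + b + 1 - 2 * m))) '' Set.Iio (a + b + 1 - 2 * m) :=
    fun k hk x hx => ⟨k, hk, by simp only [Nat.mod_eq_of_lt hk, hx]⟩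
  rintro _ (⟨i, ⟨hmi, hia⟩, rfl⟩ | ⟨i, ⟨hmi, hib⟩, rfl⟩)
  · exact hmem (i - m) (by omega) _ (by rw [joinSeq_of_le (by omega)]; congr 1; omega)
  · rcases hmi.lt_or_eq with hmi | rfl
    · exact hmem (a + b + 1 - m - i) (by omega) _
        (by rw [joinSeq_of_lt (by omega)]; congr 1; omega)
    · exact hmem 0 (by omega) _ (by rw [joinSeq_of_le (Nat.zero_le _), add_zero, hpq])

lemma IsGeodesicSeq.exists_isCycleSeq {v : V} {p q : ℕ → V} {a b : ℕ}
    (hp : IsGeodesicSeq G v p a) (hq : IsGeodesicSeq G v q b) (hba : b ≤ a) (hne : p b ≠ q b)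
    (hadj : G.Adj (p a) (q b)) :
    ∃ m < b, p m = q m ∧ ∃ f, IsCycleSeq G f (a + b + 1 - 2 * m) ∧
      p '' Set.Icc m a ∪ q '' Set.Icc m b ⊆ f '' Set.Iio (a + b + 1 - 2 * m) := by
  obtain ⟨m, hmb, hpq, hcross⟩ := hp.exists_branch hq hne
  exact ⟨m, hmb, hpq, _, hp.isCycleSeq_joinSeq hq hmb hba hpq hcross hadj,
    image_subset_image_joinSeq hmb hba hpq⟩

lemma not_adj_of_dist_add_two_le {v x y : V} (h : G.dist v x + 2 ≤ G.dist v y) : ¬ G.Adj x y :=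
  fun hxy => by rcases hxy.diff_dist_adj (u := v) with h' | h' | h' <;> omega

def nbrsAtLevel (G : SimpleGraph V) (v w : V) (k : ℕ) : Set V :=
  {x | G.Adj w x ∧ G.dist v x = k}

lemma childCount_eq (v w : V) :
    childCount G v w = (G.nbrsAtLevel v w (G.dist v w + 1)).ncard := rfl

lemma childCount_self (v : V) : childCount G v v = (G.neighborSet v).ncard := by
  simp only [childCount, dist_self, zero_add, dist_eq_one_iff_adj, and_self]
  rfl

lemma ncard_neighborSet_eq [Finite V] {v w : V} (hw : G.dist v w ≠ 0) :
    (G.neighborSet w).ncard = (G.nbrsAtLevel v w (G.dist v w - 1)).ncard +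
      (G.nbrsAtLevel v w (G.dist v w)).ncard + childCount G v w := by
  have hsplit : G.neighborSet w = (G.nbrsAtLevel v w (G.dist v w - 1) ∪
      G.nbrsAtLevel v w (G.dist v w)) ∪ G.nbrsAtLevel v w (G.dist v w + 1) := by
    ext x
    simp only [mem_neighborSet, nbrsAtLevel, Set.mem_union, Set.mem_ofPred_eq]
    refine ⟨fun hx => ?_, by rintro ((⟨hx, -⟩ | ⟨hx, -⟩) | ⟨hx, -⟩) <;> exact hx⟩
    rcases hx.diff_dist_adj (u := v) with h | h | h
    · exact Or.inl (Or.inr ⟨hx, h⟩)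
    · exact Or.inr ⟨hx, h⟩
    · exact Or.inl (Or.inl ⟨hx, h⟩)
  have hdisj : ∀ k l, k ≠ l → Disjoint (G.nbrsAtLevel v w k) (G.nbrsAtLevel v w l) :=
    fun k l hkl => Set.disjoint_left.2 fun x hk hl => hkl (hk.2.symm.trans hl.2)
  rw [childCount_eq, hsplit, Set.ncard_union_eq, Set.ncard_union_eq (hdisj _ _ (by omega))]
  exact Set.disjoint_union_left.2 ⟨hdisj _ _ (by omega), hdisj _ _ (by omega)⟩

end SimpleGraph

section

variable {V : Type*} {G : SimpleGraph V}

lemma IsOddCycle.ncard_neighborSet_inter {S : Set V} (h : IsOddCycle (G.induce S)) {c : V}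
    (hc : c ∈ S) : (G.neighborSet c ∩ S).ncard = 2 :=
  (ncard_neighborSet_induce ⟨c, hc⟩).symm.trans (h.2.1 _)

lemma IsOddCycle.eq_or_eq_of_adj {S : Set V} (h : IsOddCycle (G.induce S)) {c x y z : V}
    (hc : c ∈ S) (hx : x ∈ S) (hy : y ∈ S) (hz : z ∈ S) (hcx : G.Adj c x) (hcy : G.Adj c y)
    (hxy : x ≠ y) (hcz : G.Adj c z) : z = x ∨ z = y := by
  have h2 := h.ncard_neighborSet_inter hc
  have hpair : ({x, y} : Set V) = G.neighborSet c ∩ S :=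
    Set.eq_of_subset_of_ncard_le
      (Set.insert_subset ⟨hcx, hx⟩ (Set.singleton_subset_iff.2 ⟨hcy, hy⟩))
      (by rw [h2, Set.ncard_pair hxy]) (Set.finite_of_ncard_ne_zero (by omega))
  have hz' : z ∈ ({x, y} : Set V) := hpair ▸ ⟨hcz, hz⟩
  simpa using hz'

end

namespace NoSmallDCC

variable {V : Type*} {G : SimpleGraph V} {r : ℕ}

lemma isOddCycle (h : NoSmallDCC G r) {S : Set V} (hS : TwoConnected (G.induce S))
    (hne : G.induce S ≠ ⊤) (c : S) (hc : ∀ x, (G.induce S).dist c x ≤ r) :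
    IsOddCycle (G.induce S) := by
  by_contra hodd
  exact h S ⟨hS, hne, hodd⟩ ⟨c, hc⟩

lemma subsingleton_nbrsAtLevel (h : NoSmallDCC G r) {v w : V} (hw : G.dist v w ≠ 0)
    (hwr : G.dist v w ≤ r) : (G.nbrsAtLevel v w (G.dist v w - 1)).Subsingleton := by
  rintro x ⟨hwx, hx⟩ y ⟨hwy, hy⟩
  by_contra hxy
  obtain ⟨p, hp, hpx, hpw⟩ := exists_isGeodesicSeq_of_adj (v := v) hwx.symm (by omega)
  obtain ⟨q, hq, hqy⟩ :=
    ((Reachable.of_dist_ne_zero hw).trans hwy.reachable).exists_isGeodesicSeq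
  rw [hx] at hpx
  rw [hy] at hq hqy
  obtain ⟨m, hm, -, f, hf, hsub⟩ := hp.exists_isCycleSeq hq (by omega)
    (by rw [hpx, hqy]; exact hxy) (by rw [hpw, hqy]; exact hwy)
  have hpm := hp.dist_eq m (by omega)
  have hodd := h.isOddCycle hf.twoConnected
    (induce_ne_top_of_not_adj (hsub (Or.inl ⟨m, ⟨le_rfl, by omega⟩, rfl⟩))
      (hsub (Or.inl ⟨_, ⟨by omega, le_rfl⟩, rfl⟩))
      (ne_of_apply_ne (G.dist v) (by rw [hpm, hpw]; omega))
      (not_adj_of_dist_add_two_le (by rw [hpm, hpw]; omega)))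
    ⟨_, hf.mem_image 0⟩ fun z => (hf.dist_le _ z).trans (by omega)
  have hL := hodd.2.2
  rw [Nat.card_coe_set_eq, hf.ncard_image] at hL
  exact Nat.not_odd_iff_even.2 ⟨G.dist v w - m, by omega⟩ hL

lemma mem_of_adj_of_dist_eq (h : NoSmallDCC G r) {S : Set V} (hS : TwoConnected (G.induce S))
    (hne : G.induce S ≠ ⊤) {v c p x : V} (hc : c ∈ S)
    (hrad : ∀ y, (G.induce S).dist ⟨c, hc⟩ y ≤ r) (hp : p ∈ S) (hpc : G.Adj p c)
    (hpd : G.dist v c = G.dist v p + 1) (hcr : G.dist v c ≤ r) (hcx : G.Adj c x)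
    (hxd : G.dist v x = G.dist v c) : x ∈ S := by
  by_contra hxS
  have hodd := h.isOddCycle hS hne ⟨c, hc⟩ hrad
  obtain ⟨P, hP, hPp, hPc⟩ := exists_isGeodesicSeq_of_adj hpc hpd
  obtain ⟨R, hR, hRx⟩ :=
    (Reachable.of_dist_ne_zero (by omega : G.dist v x ≠ 0)).exists_isGeodesicSeq
  rw [hxd] at hR hRx
  obtain ⟨m, hm, -, f, hf, hsub⟩ := hP.exists_isCycleSeq hR le_rfl
    (by rw [hPc, hRx]; exact hcx.ne) (by rw [hPc, hRx]; exact hcx)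
  set D := f '' Set.Iio (G.dist v c + G.dist v c + 1 - 2 * m)
  have hcD : c ∈ D := hsub (Or.inl ⟨_, ⟨by omega, le_rfl⟩, hPc⟩)
  have hpD : p ∈ D := hsub (Or.inl ⟨_, ⟨by omega, by omega⟩, hPp⟩)
  have hxD : x ∈ D := hsub (Or.inr ⟨_, ⟨by omega, le_rfl⟩, hRx⟩)
  have hT : IsOddCycle (G.induce (S ∪ D)) := by
    refine h.isOddCycle
      (twoConnected_induce_union hS hf.twoConnected ⟨hc, hcD⟩ ⟨hp, hpD⟩ hpc.ne.symm) ?_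
      ⟨c, Or.inl hc⟩ ?_
    · rw [Ne, induce_eq_top_iff] at hne ⊢
      exact fun hT => hne (hT.mono Set.subset_union_left)
    · rintro ⟨y, hy | hy⟩
      · exact (dist_induce_le_of_subset Set.subset_union_left
          (hS.connected_induce.preconnected _ ⟨y, hy⟩)).trans (hrad _)
      · exact (dist_induce_le_of_subset Set.subset_union_right
          (hf.twoConnected.connected_induce.preconnected ⟨c, hcD⟩ ⟨y, hy⟩)).trans
          ((hf.dist_le _ _).trans (by omega))
  -- in `S ∪ D` the vertex `c` has its two cycle neighbours from `S` and also `x`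
  have hTc := hT.ncard_neighborSet_inter (Or.inl hc)
  have h3 : (insert x (G.neighborSet c ∩ S)).ncard ≤ (G.neighborSet c ∩ (S ∪ D)).ncard :=
    Set.ncard_le_ncard
      (Set.insert_subset ⟨hcx, Or.inr hxD⟩ (Set.inter_subset_inter_right _ Set.subset_union_left))
      (Set.finite_of_ncard_ne_zero (by omega))
  have hSc := hodd.ncard_neighborSet_inter hc
  rw [Set.ncard_insert_of_notMem (fun hx => hxS hx.2) (Set.finite_of_ncard_ne_zero (by omega)),
    hSc, hTc] at h3
  omega

lemma nbrsAtLevel_subset_pair (h : NoSmallDCC G r) {S : Set V} (hS : TwoConnected (G.induce S))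
    (hne : G.induce S ≠ ⊤) {v c p n : V} (hc : c ∈ S)
    (hrad : ∀ y, (G.induce S).dist ⟨c, hc⟩ y ≤ r) (hp : p ∈ S) (hn : n ∈ S) (hpc : G.Adj p c)
    (hcn : G.Adj c n) (hpn : p ≠ n) (hpd : G.dist v c = G.dist v p + 1)
    (hcr : G.dist v c ≤ r) : G.nbrsAtLevel v c (G.dist v c) ⊆ {p, n} := fun _ hx =>
  (h.isOddCycle hS hne ⟨c, hc⟩ hrad).eq_or_eq_of_adj hc hp hn
    (h.mem_of_adj_of_dist_eq hS hne hc hrad hp hpc hpd hcr hx.1 hx.2) hpc.symm hcn hpn hx.1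

lemma nbrsAtLevel_eq_of_not_adj (h : NoSmallDCC G r) {v u u' y : V} (hu0 : G.dist v u ≠ 0)
    (hu' : G.dist v u' = G.dist v u + 1) (hu'r : G.dist v u' ≤ r) (hadj : G.Adj u u')
    (hy : y ∈ G.nbrsAtLevel v u' (G.dist v u')) (hyu : ¬ G.Adj u y) :
    G.nbrsAtLevel v u' (G.dist v u') = {y} ∧ G.nbrsAtLevel v u (G.dist v u) = ∅ := by
  obtain ⟨hu'y, hyd⟩ := hy
  obtain ⟨p, hp, hpu, hpu'⟩ := exists_isGeodesicSeq_of_adj hadj hu'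
  obtain ⟨q, hq, hqy⟩ :=
    (Reachable.of_dist_ne_zero (by omega : G.dist v y ≠ 0)).exists_isGeodesicSeq
  rw [hyd] at hq hqy
  obtain ⟨m, hm, hpq, f, hf, hsub⟩ := hp.exists_isCycleSeq hq le_rfl
    (by rw [hpu', hqy]; exact hu'y.ne) (by rw [hpu', hqy]; exact hu'y)
  have hm2 : m + 2 ≤ G.dist v u' := by
    by_contra hm2
    have hmu : m = G.dist v u := by omega
    have := hq.adj m (by omega)
    rw [← hpq, hmu, hpu, ← hu', hqy] at this
    exact hyu this
  set S := f '' Set.Iio (G.dist v u' + G.dist v u' + 1 - 2 * m)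
  have hpS : ∀ i, m ≤ i → i ≤ G.dist v u' → p i ∈ S :=
    fun i h₁ h₂ => hsub (Or.inl ⟨i, ⟨h₁, h₂⟩, rfl⟩)
  have hu'S : u' ∈ S := hpu' ▸ hpS _ (by omega) le_rfl
  have huS : u ∈ S := hpu ▸ hpS _ (by omega) (by omega)
  have hyS : y ∈ S := hsub (Or.inr ⟨_, ⟨by omega, le_rfl⟩, hqy⟩)
  have hgS : p (G.dist v u - 1) ∈ S := hpS _ (by omega) (by omega)
  have hpm := hp.dist_eq m (by omega)
  have hne : G.induce S ≠ ⊤ := induce_ne_top_of_not_adj (hpS m le_rfl (by omega)) hu'S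
    (ne_of_apply_ne (G.dist v) (by omega)) (not_adj_of_dist_add_two_le (v := v) (by omega))
  have hrad (c : S) : ∀ x, (G.induce S).dist c x ≤ r := fun x => (hf.dist_le c x).trans (by omega)
  have hgu : G.Adj (p (G.dist v u - 1)) u := by
    have := hp.adj (G.dist v u - 1) (by omega)
    rwa [Nat.sub_add_cancel (by omega), hpu] at this
  have hgd := hp.dist_eq (G.dist v u - 1) (by omega)
  constructor
  · refine Set.eq_singleton_iff_unique_mem.2 ⟨⟨hu'y, hyd⟩, fun x hx => ?_⟩
    rcases h.nbrsAtLevel_subset_pair hf.twoConnected hne hu'S (hrad _) huS hyS hadj hu'y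
      (ne_of_apply_ne (G.dist v) (by omega)) hu' hu'r hx with rfl | rfl
    · exact absurd hx.2 (by omega)
    · rfl
  · refine Set.eq_empty_iff_forall_notMem.2 fun x hx => ?_
    rcases h.nbrsAtLevel_subset_pair hf.twoConnected hne huS (hrad _) hgS hu'S hgu hadj
      (ne_of_apply_ne (G.dist v) (by omega)) (by omega) (by omega) hx with rfl | rfl <;>
    exact absurd hx.2 (by omega)

end NoSmallDCC

/-- BFS expansion lemma: with no DCC of radius at most r, for a vertex u' of
degree at least 3 at level t ≤ r with BFS-parent u, the numbers of BFS
children satisfy d(u) + d(u') ≥ min(deg u, deg u'). -/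
theorem stmt4 {V : Type*} [Fintype V] (G : SimpleGraph V) (r : ℕ)
    (h : NoSmallDCC G r) (v u u' : V) (t : ℕ) (ht1 : 1 ≤ t) (htr : t ≤ r)
    (hu' : G.dist v u' = t) (hadj : G.Adj u u') (hu : G.dist v u = t - 1)
    (hdeg : 3 ≤ (G.neighborSet u').ncard) :
    min (G.neighborSet u).ncard (G.neighborSet u').ncard ≤
      childCount G v u + childCount G v u' := by
  have hchild : childCount G v u = (G.nbrsAtLevel v u t).ncard := by
    rw [childCount_eq, hu, Nat.sub_add_cancel ht1]
  obtain rfl | ht2 : t = 1 ∨ 2 ≤ t := by omega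
  · have hvu : v = u :=
      ((Reachable.of_dist_ne_zero (by omega)).trans hadj.symm.reachable).dist_eq_zero_iff.1 hu
    subst hvu
    have := childCount_self (G := G) v
    omega
  have hdeg' := ncard_neighborSet_eq (G := G) (v := v) (w := u') (by omega)
  have hpar : G.nbrsAtLevel v u' (G.dist v u' - 1) = {u} :=
    (h.subsingleton_nbrsAtLevel (by omega) (by omega)).eq_singleton_of_mem
      ⟨hadj.symm, by omega⟩
  rw [hpar, Set.ncard_singleton] at hdeg'
  by_cases hB : G.nbrsAtLevel v u' (G.dist v u') ⊆ G.neighborSet u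
  · have hsub : insert u' (G.nbrsAtLevel v u' (G.dist v u')) ⊆ G.nbrsAtLevel v u t :=
      Set.insert_subset ⟨hadj, hu'⟩ fun x hx => ⟨hB hx, hu' ▸ hx.2⟩
    have := Set.ncard_le_ncard hsub
    rw [Set.ncard_insert_of_notMem fun hx => G.loopless.irrefl u' hx.1] at this
    omega
  · obtain ⟨y, hy, hyu⟩ := Set.not_subset.1 hB
    obtain ⟨hB', hBu⟩ :=
      h.nbrsAtLevel_eq_of_not_adj (by omega) (by omega) (by omega) hadj hy hyu
    have hdegu := ncard_neighborSet_eq (G := G) (v := v) (w := u) (by omega)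
    have hgu := Set.ncard_le_one_iff_subsingleton.2
      (h.subsingleton_nbrsAtLevel (v := v) (w := u) (by omega) (by omega))
    rw [hBu, Set.ncard_empty] at hdegu
    rw [hB', Set.ncard_singleton] at hdeg'
    omega
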